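/- arXiv:2403.15906 — 2 statements merged into one kernel-verified Lean document; each statement's English description precedes it below -/
import Mathlib

section
/- Let (M ⇄ N, h) be a filtered contraction with complete filtrations, and let ∂ be a perturbation of the differential on N (lowering filtration, with (d+∂)² = 0). Then the infinite series D = Σ_{n≥0} g∂(h∂)ⁿ∇ converges, D is a perturbation of the differential on M, and the maps ∇_∂ = Σ(h∂)ⁿ∇, g_∂ = Σ g(∂h)ⁿ, h_∂ = Σ(h∂)ⁿh form a filtered contraction between M_D and N_∂. -/
/-!
Put `S = (1 - h∂)⁻¹` and `T = (1 - ∂h)⁻¹`. Since `∂` lowers the filtration and `h` preserves it,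
`h∂` and `∂h` are locally nilpotent, so `1 - h∂` and `1 - ∂h` are invertible, their inverses are
the pointwise finite geometric series `∑ (h∂)ⁿ` and `∑ (∂h)ⁿ`, and they preserve the filtration.
The perturbed data are `D = g∂S∇`, `∇_∂ = S∇`, `g_∂ = gT` and `h_∂ = Sh`. Every contraction identity
for them is an identity in the ring `End N`, which follows from `S = 1 + h∂S = 1 + Sh∂`, `∂S = T∂`,
`dh + hd = ∇g - 1`, `d∂ + ∂d + ∂² = 0` and the side conditions `gh = 0`, `h∇ = 0`, `hh = 0`.
Finally `(d_M + D)² = 0` because `∇_∂` is a chain map into `(N, d + ∂)` with left inverse `g`.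
-/

/-- `n`-th term `g ∂ (h ∂)ⁿ ∇` of the series defining the perturbed differential. -/
noncomputable def pertTerm (R : Type) [CommRing R] (M N : Type)
    [AddCommGroup M] [Module R M] [AddCommGroup N] [Module R N]
    (g : N →ₗ[R] M) (nab : M →ₗ[R] N) (h pert : N →ₗ[R] N) (n : ℕ) : M →ₗ[R] M :=
  g ∘ₗ pert ∘ₗ ((h ∘ₗ pert) ^ n : Module.End R N) ∘ₗ nab

open Finset Filter Ring

namespace Ring

variable {A : Type*} [Ring A] {a b : A}

theorem mul_inverse_one_sub (hu : IsUnit (1 - a)) : a * (1 - a)⁻¹ʳ = (1 - a)⁻¹ʳ - 1 := by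
  have := mul_inverse_cancel _ hu
  rw [sub_mul, one_mul] at this
  exact eq_sub_of_add_eq (sub_eq_iff_eq_add'.1 this).symm

theorem inverse_one_sub_mul (hu : IsUnit (1 - a)) : (1 - a)⁻¹ʳ * a = (1 - a)⁻¹ʳ - 1 := by
  have := inverse_mul_cancel _ hu
  rw [mul_sub, mul_one] at this
  exact eq_sub_of_add_eq (sub_eq_iff_eq_add'.1 this).symm

theorem mul_inverse_one_sub_mul (hab : IsUnit (1 - a * b)) (hba : IsUnit (1 - b * a)) :
    b * (1 - a * b)⁻¹ʳ = (1 - b * a)⁻¹ʳ * b :=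
  calc b * (1 - a * b)⁻¹ʳ = (1 - b * a)⁻¹ʳ * ((1 - b * a) * b) * (1 - a * b)⁻¹ʳ := by
        rw [inverse_mul_cancel_left _ _ hba]
    _ = (1 - b * a)⁻¹ʳ * b * ((1 - a * b) * (1 - a * b)⁻¹ʳ) := by noncomm_ring
    _ = (1 - b * a)⁻¹ʳ * b := by rw [mul_inverse_cancel _ hab, mul_one]

end Ring

namespace Module.End

variable {R N : Type*} [Semiring R] [AddCommGroup N] [Module R N]

def IsLocallyNilpotent (A : End R N) : Prop := ∀ x, ∃ k, (A ^ k) x = 0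

namespace IsLocallyNilpotent

variable {A : End R N}

theorem of_filtration {F : ℕ → Submodule R N} (hF : ∀ x, ∃ n, x ∈ F n)
    (hlow : ∀ n, ∀ x ∈ F (n + 1), A x ∈ F n) (hzero : ∀ x ∈ F 0, A x = 0) :
    A.IsLocallyNilpotent := by
  have hkill : ∀ n, ∀ x ∈ F n, (A ^ (n + 1)) x = 0 := by
    intro n
    induction n with
    | zero => simpa using hzero
    | succ n ih => intro x hx; rw [pow_succ, mul_apply]; exact ih _ (hlow n x hx)
  intro x
  obtain ⟨n, hn⟩ := hF x
  exact ⟨n + 1, hkill n x hn⟩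

theorem eventually_pow_apply_eq_zero (hA : A.IsLocallyNilpotent) (x : N) :
    ∀ᶠ n in atTop, (A ^ n) x = 0 := by
  obtain ⟨k, hk⟩ := hA x
  filter_upwards [eventually_ge_atTop k] with n hn
  rw [← Nat.sub_add_cancel hn, pow_add, mul_apply, hk, map_zero]

theorem isUnit_one_sub (hA : A.IsLocallyNilpotent) : IsUnit (1 - A) := by
  refine (isUnit_iff _).2 ⟨(injective_iff_map_eq_zero _).2 fun x hx => ?_, fun y => ?_⟩
  · have hfix : ∀ n, (A ^ n) x = x := by
      have hAx : A x = x := (sub_eq_zero.1 hx).symm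
      intro n
      induction n with
      | zero => rfl
      | succ n ih => rw [pow_succ, mul_apply, hAx, ih]
    obtain ⟨k, hk⟩ := hA x
    rwa [hfix] at hk
  · obtain ⟨k, hk⟩ := hA y
    refine ⟨(∑ n ∈ range k, A ^ n) y, ?_⟩
    rw [← mul_apply, mul_neg_geom_sum, LinearMap.sub_apply, one_apply, hk, sub_zero]

theorem eventually_geom_sum_apply (hA : A.IsLocallyNilpotent) (x : N) :
    ∀ᶠ m in atTop, (∑ n ∈ range m, A ^ n) x = (1 - A)⁻¹ʳ x := by
  filter_upwards [hA.eventually_pow_apply_eq_zero x] with m hm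
  rw [← inverse_mul_cancel_left _ (∑ n ∈ range m, A ^ n) hA.isUnit_one_sub, mul_neg_geom_sum,
    mul_apply, LinearMap.sub_apply, hm, sub_zero, one_apply]

theorem eventually_sum_comp_pow_comp_apply {P Q : Type*} [AddCommGroup P] [Module R P]
    [AddCommGroup Q] [Module R Q] (hA : A.IsLocallyNilpotent) (u : N →ₗ[R] P)
    (v : Q →ₗ[R] N) (x : Q) :
    ∀ᶠ m in atTop, (∑ n ∈ range m, u ∘ₗ (A ^ n) ∘ₗ v) x = u ((1 - A)⁻¹ʳ (v x)) := by
  filter_upwards [hA.eventually_geom_sum_apply (v x)] with m hm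
  simp only [LinearMap.sum_apply, LinearMap.comp_apply, ← map_sum, ← hm]

theorem inverse_one_sub_apply_mem (hA : A.IsLocallyNilpotent) {P : Submodule R N}
    (hP : ∀ x ∈ P, A x ∈ P) {x : N} (hx : x ∈ P) : (1 - A)⁻¹ʳ x ∈ P := by
  obtain ⟨m, hm⟩ := (hA.eventually_geom_sum_apply x).exists
  rw [← hm, LinearMap.sum_apply]
  exact sum_mem fun n _ => pow_apply_mem_of_forall_mem n hP x hx

end IsLocallyNilpotent

theorem inverse_one_sub_apply {A : End R N} (hu : IsUnit (1 - A)) (x : N) :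
    (1 - A)⁻¹ʳ x = x + A ((1 - A)⁻¹ʳ x) := by
  have := LinearMap.congr_fun (mul_inverse_one_sub hu) x
  rw [mul_apply, LinearMap.sub_apply, one_apply] at this
  rw [this, add_sub_cancel]

theorem inverse_one_sub_apply' {A : End R N} (hu : IsUnit (1 - A)) (x : N) :
    (1 - A)⁻¹ʳ x = x + (1 - A)⁻¹ʳ (A x) := by
  have := LinearMap.congr_fun (inverse_one_sub_mul hu) x
  rw [mul_apply, LinearMap.sub_apply, one_apply] at this
  rw [this, add_sub_cancel]

end Module.End

section PerturbationIdentities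

variable {A : Type*} [Ring A] {d h p ι : A}

/- For `ι = ∇g`, the next two identities say that `S∇` and `gT` are chain maps for the perturbed
differentials. -/
theorem inverse_mul_add_mul_mul_inverse (hι : d * h + h * d = ι - 1)
    (hdp : d * p + p * d + p * p = 0) (hu : IsUnit (1 - h * p)) :
    (1 - h * p)⁻¹ʳ * (d + ι * p * (1 - h * p)⁻¹ʳ) = (d + p) * (1 - h * p)⁻¹ʳ := by
  have hS₁ := mul_inverse_one_sub hu
  have hS₂ : (1 - h * p)⁻¹ʳ * h * p = (1 - h * p)⁻¹ʳ - 1 := by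
    rw [mul_assoc]; exact inverse_one_sub_mul hu
  generalize (1 - h * p)⁻¹ʳ = S at *
  calc S * (d + ι * p * S)
      = S * d + S * p * S + S * d * (h * p * S) + S * h * (d * p + p * d + p * p) * S
          - (S * h * p) * (d * S) - (S * h * p) * (p * S) := by
        rw [show ι = 1 + (d * h + h * d) by rw [hι]; abel]; noncomm_ring
    _ = (d + p) * S := by rw [hS₁, hS₂, hdp]; noncomm_ring

theorem add_inverse_mul_mul_mul_inverse (hι : d * h + h * d = ι - 1)
    (hdp : d * p + p * d + p * p = 0) (hu : IsUnit (1 - p * h)) :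
    (d + (1 - p * h)⁻¹ʳ * p * ι) * (1 - p * h)⁻¹ʳ = (1 - p * h)⁻¹ʳ * (d + p) := by
  have hT₁ := mul_inverse_one_sub hu
  have hT₂ : (1 - p * h)⁻¹ʳ * p * h = (1 - p * h)⁻¹ʳ - 1 := by
    rw [mul_assoc]; exact inverse_one_sub_mul hu
  generalize (1 - p * h)⁻¹ʳ = T at *
  calc (d + T * p * ι) * T
      = d * T + T * p * T + (T * p * h) * d * T + T * (d * p + p * d + p * p) * h * T
          - (T * d) * (p * h * T) - (T * p) * (p * h * T) := by
        rw [show ι = 1 + (d * h + h * d) by rw [hι]; abel]; noncomm_ring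
    _ = T * (d + p) := by rw [hT₁, hT₂, hdp]; noncomm_ring

theorem perturbed_homotopy (hι : d * h + h * d = ι - 1)
    (hdp : d * p + p * d + p * p = 0) (hS : IsUnit (1 - h * p)) (hT : IsUnit (1 - p * h)) :
    (d + p) * ((1 - h * p)⁻¹ʳ * h) + (1 - h * p)⁻¹ʳ * h * (d + p)
      = (1 - h * p)⁻¹ʳ * ι * (1 - p * h)⁻¹ʳ - 1 := by
  have hK := inverse_mul_add_mul_mul_inverse hι hdp hS
  have hpS := mul_inverse_one_sub_mul hS hT
  have hS₂ : (1 - h * p)⁻¹ʳ * h * p = (1 - h * p)⁻¹ʳ - 1 := by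
    rw [mul_assoc]; exact inverse_one_sub_mul hS
  have hT₂ : (1 - p * h)⁻¹ʳ * p * h = (1 - p * h)⁻¹ʳ - 1 := by
    rw [mul_assoc]; exact inverse_one_sub_mul hT
  generalize (1 - h * p)⁻¹ʳ = S at *
  generalize (1 - p * h)⁻¹ʳ = T at *
  calc (d + p) * (S * h) + S * h * (d + p)
      = (d + p) * S * h + S * h * d + S * h * p := by noncomm_ring
    _ = S * (d * h + h * d) + S * ι * (p * S) * h + (S * h * p) := by rw [← hK]; noncomm_ring
    _ = S * ι * (1 + T * p * h) - 1 := by rw [hι, hS₂, hpS]; noncomm_ring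
    _ = S * ι * T - 1 := by rw [hT₂]; noncomm_ring

end PerturbationIdentities

section Contraction

variable {R M N : Type*} [Semiring R] [AddCommGroup M] [Module R M] [AddCommGroup N] [Module R N]

theorem comp_self_eq_zero_of_retract {D : Module.End R M} {d : Module.End R N}
    {r : N →ₗ[R] M} {i : M →ₗ[R] N} (hri : r ∘ₗ i = LinearMap.id) (hi : d ∘ₗ i = i ∘ₗ D)
    (hd : d ∘ₗ d = 0) : D ∘ₗ D = 0 := by
  have hi' (x : M) : d (i x) = i (D x) := LinearMap.congr_fun hi x
  ext x
  calc D (D x) = r (i (D (D x))) := (LinearMap.congr_fun hri _).symm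
    _ = r (d (d (i x))) := by rw [hi', hi']
    _ = 0 := by rw [← LinearMap.comp_apply d d, hd, LinearMap.zero_apply, map_zero]

structure IsContraction (dM : Module.End R M) (dN : Module.End R N) (g : N →ₗ[R] M)
    (nab : M →ₗ[R] N) (h : Module.End R N) : Prop where
  g_comp_nab : g ∘ₗ nab = LinearMap.id
  homotopy : dN ∘ₗ h + h ∘ₗ dN = nab ∘ₗ g - LinearMap.id
  g_comp_h : g ∘ₗ h = 0
  h_comp_nab : h ∘ₗ nab = 0
  h_comp_h : h ∘ₗ h = 0
  g_chain : dM ∘ₗ g = g ∘ₗ dN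
  nab_chain : dN ∘ₗ nab = nab ∘ₗ dM

namespace IsContraction

variable {dM : Module.End R M} {dN h p : Module.End R N} {g : N →ₗ[R] M} {nab : M →ₗ[R] N}

theorem g_nab_apply (C : IsContraction dM dN g nab h) (x : M) : g (nab x) = x :=
  LinearMap.congr_fun C.g_comp_nab x

theorem g_h_apply (C : IsContraction dM dN g nab h) (x : N) : g (h x) = 0 :=
  LinearMap.congr_fun C.g_comp_h x

theorem h_nab_apply (C : IsContraction dM dN g nab h) (x : M) : h (nab x) = 0 :=
  LinearMap.congr_fun C.h_comp_nab x

theorem h_h_apply (C : IsContraction dM dN g nab h) (x : N) : h (h x) = 0 :=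
  LinearMap.congr_fun C.h_comp_h x

theorem g_chain_apply (C : IsContraction dM dN g nab h) (x : N) : dM (g x) = g (dN x) :=
  LinearMap.congr_fun C.g_chain x

theorem nab_chain_apply (C : IsContraction dM dN g nab h) (x : M) : dN (nab x) = nab (dM x) :=
  LinearMap.congr_fun C.nab_chain x

theorem g_inverse_apply (C : IsContraction dM dN g nab h) (hS : IsUnit (1 - h * p)) (x : N) :
    g ((1 - h * p)⁻¹ʳ x) = g x := by
  rw [Module.End.inverse_one_sub_apply hS, map_add, Module.End.mul_apply, C.g_h_apply, add_zero]

theorem h_inverse_apply (C : IsContraction dM dN g nab h) (hS : IsUnit (1 - h * p)) (x : N) :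
    h ((1 - h * p)⁻¹ʳ x) = h x := by
  rw [Module.End.inverse_one_sub_apply hS, map_add, Module.End.mul_apply, C.h_h_apply, add_zero]

theorem g_comp_inverse_comp_nab (C : IsContraction dM dN g nab h) (hS : IsUnit (1 - h * p)) :
    g ∘ₗ (1 - h * p)⁻¹ʳ ∘ₗ nab = LinearMap.id := by
  ext x
  exact (C.g_inverse_apply hS _).trans (C.g_nab_apply x)

theorem inverse_h_apply (C : IsContraction dM dN g nab h) (hT : IsUnit (1 - p * h)) (x : N) :
    (1 - p * h)⁻¹ʳ (h x) = h x := by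
  rw [Module.End.inverse_one_sub_apply' hT, Module.End.mul_apply, C.h_h_apply, map_zero,
    map_zero, add_zero]

theorem perturb (C : IsContraction dM dN g nab h) (hdN : dN * dN = 0)
    (hp : (dN + p) * (dN + p) = 0) (hS : IsUnit (1 - h * p)) (hT : IsUnit (1 - p * h)) :
    IsContraction (dM + g ∘ₗ p ∘ₗ (1 - h * p)⁻¹ʳ ∘ₗ nab) (dN + p) (g ∘ₗ (1 - p * h)⁻¹ʳ)
      ((1 - h * p)⁻¹ʳ ∘ₗ nab) ((1 - h * p)⁻¹ʳ ∘ₗ h) := by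
  have hι : dN * h + h * dN = nab ∘ₗ g - 1 := C.homotopy
  have hdp : dN * p + p * dN + p * p = 0 :=
    calc dN * p + p * dN + p * p = (dN + p) * (dN + p) - dN * dN := by noncomm_ring
      _ = 0 := by rw [hp, hdN, sub_zero]
  set S := (1 - h * p)⁻¹ʳ
  set T := (1 - p * h)⁻¹ʳ
  have hpS (x : N) : p (S x) = T (p x) := LinearMap.congr_fun (mul_inverse_one_sub_mul hS hT) x
  have hSh (x : N) : S (h x) = h (T x) :=
    (LinearMap.congr_fun (mul_inverse_one_sub_mul hT hS) x).symm
  have hK₁ (x : N) : S (dN x + nab (g (p (S x)))) = dN (S x) + p (S x) :=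
    LinearMap.congr_fun (inverse_mul_add_mul_mul_inverse hι hdp hS) x
  have hK₂ (x : N) : dN (T x) + T (p (nab (g (T x)))) = T (dN x + p x) :=
    LinearMap.congr_fun (add_inverse_mul_mul_mul_inverse hι hdp hT) x
  refine ⟨?_, perturbed_homotopy hι hdp hS hT, ?_, ?_, ?_, ?_, ?_⟩ <;> ext x
  · show g (T (S (nab x))) = x
    rw [Module.End.inverse_one_sub_apply' hT, Module.End.mul_apply, C.h_inverse_apply hS,
      C.h_nab_apply, map_zero, map_zero, add_zero, C.g_inverse_apply hS, C.g_nab_apply]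
  · show g (T (S (h x))) = 0
    rw [hSh, C.inverse_h_apply hT, C.g_h_apply]
  · show S (h (S (nab x))) = 0
    rw [C.h_inverse_apply hS, C.h_nab_apply, map_zero]
  · show S (h (S (h x))) = 0
    rw [C.h_inverse_apply hS, C.h_h_apply, map_zero]
  · show dM (g (T x)) + g (p (S (nab (g (T x))))) = g (T (dN x + p x))
    rw [C.g_chain_apply, hpS, ← map_add, hK₂]
  · show dN (S (nab x)) + p (S (nab x)) = S (nab (dM x + g (p (S (nab x)))))
    rw [map_add, ← C.nab_chain_apply, hK₁]

end IsContraction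

end Contraction

theorem statement1_general (R : Type) [CommRing R]
    (M N : Type) [AddCommGroup M] [Module R M] [AddCommGroup N] [Module R N]
    (FM : ℕ → Submodule R M) (FN : ℕ → Submodule R N)
    (hFNmono : Monotone FN) (hFNexh : ∀ x : N, ∃ n, x ∈ FN n)
    (dM : M →ₗ[R] M) (dN : N →ₗ[R] N)
    (hdN : dN ∘ₗ dN = 0)
    (g : N →ₗ[R] M) (nab : M →ₗ[R] N) (h : N →ₗ[R] N)
    (hgchain : dM ∘ₗ g = g ∘ₗ dN) (hnabchain : dN ∘ₗ nab = nab ∘ₗ dM)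
    (hgfil : ∀ n, ∀ x ∈ FN n, g x ∈ FM n) (hnabfil : ∀ n, ∀ x ∈ FM n, nab x ∈ FN n)
    (hhfil : ∀ n, ∀ x ∈ FN n, h x ∈ FN n)
    (hretr : g ∘ₗ nab = LinearMap.id)
    (hDh : dN ∘ₗ h + h ∘ₗ dN = nab ∘ₗ g - LinearMap.id)
    (hgh : g ∘ₗ h = 0) (hhnab : h ∘ₗ nab = 0) (hhh : h ∘ₗ h = 0)
    -- the perturbation of the differential of `N`:
    (pert : N →ₗ[R] N)
    (hpert : (dN + pert) ∘ₗ (dN + pert) = 0)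
    (hpertlow : ∀ n, ∀ x ∈ FN (n + 1), pert x ∈ FN n)
    (hpert0 : ∀ x ∈ FN 0, pert x = 0) :
    ∃ (Dp : M →ₗ[R] M) (nabP : M →ₗ[R] N) (gP : N →ₗ[R] M) (hP : N →ₗ[R] N),
      -- convergence of the four series:
      (∀ x : M, ∃ m₀, ∀ m ≥ m₀,
        (∑ n ∈ Finset.range m, pertTerm R M N g nab h pert n) x = Dp x) ∧
      (∀ x : M, ∃ m₀, ∀ m ≥ m₀,
        (∑ n ∈ Finset.range m,
          (((h ∘ₗ pert) ^ n : Module.End R N) ∘ₗ nab)) x = nabP x) ∧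
      (∀ x : N, ∃ m₀, ∀ m ≥ m₀,
        (∑ n ∈ Finset.range m,
          (g ∘ₗ ((pert ∘ₗ h) ^ n : Module.End R N))) x = gP x) ∧
      (∀ x : N, ∃ m₀, ∀ m ≥ m₀,
        (∑ n ∈ Finset.range m,
          (((h ∘ₗ pert) ^ n : Module.End R N) ∘ₗ h)) x = hP x) ∧
      -- `Dp` is a perturbation of the differential of `M`:
      ((dM + Dp) ∘ₗ (dM + Dp) = 0) ∧
      (∀ n, ∀ x ∈ FM (n + 1), Dp x ∈ FM n) ∧ (∀ x ∈ FM 0, Dp x = 0) ∧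
      -- the perturbed data form a filtered contraction:
      (gP ∘ₗ nabP = LinearMap.id) ∧
      ((dN + pert) ∘ₗ hP + hP ∘ₗ (dN + pert) = nabP ∘ₗ gP - LinearMap.id) ∧
      (gP ∘ₗ hP = 0) ∧ (hP ∘ₗ nabP = 0) ∧ (hP ∘ₗ hP = 0) ∧
      ((dM + Dp) ∘ₗ gP = gP ∘ₗ (dN + pert)) ∧
      ((dN + pert) ∘ₗ nabP = nabP ∘ₗ (dM + Dp)) ∧
      (∀ n, ∀ x ∈ FN n, gP x ∈ FM n) ∧ (∀ n, ∀ x ∈ FM n, nabP x ∈ FN n) ∧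
      (∀ n, ∀ x ∈ FN n, hP x ∈ FN n) := by
  have C : IsContraction dM dN g nab h := ⟨hretr, hDh, hgh, hhnab, hhh, hgchain, hnabchain⟩
  have hpert_mem (n : ℕ) (x : N) (hx : x ∈ FN n) : pert x ∈ FN n := by
    cases n with
    | zero => rw [hpert0 x hx]; exact zero_mem _
    | succ n => exact hFNmono n.le_succ (hpertlow n x hx)
  have hhp : Module.End.IsLocallyNilpotent (h * pert) := .of_filtration hFNexh
    (fun n x hx => hhfil n _ (hpertlow n x hx)) (fun x hx => by simp [hpert0 x hx])
  have hph : Module.End.IsLocallyNilpotent (pert * h) := .of_filtration hFNexh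
    (fun n x hx => hpertlow n _ (hhfil _ x hx)) (fun x hx => hpert0 _ (hhfil 0 x hx))
  have hhp_mem (n : ℕ) (x : N) (hx : x ∈ FN n) : (1 - h * pert)⁻¹ʳ x ∈ FN n :=
    hhp.inverse_one_sub_apply_mem (fun y hy => hhfil n _ (hpert_mem n y hy)) hx
  have hph_mem (n : ℕ) (x : N) (hx : x ∈ FN n) : (1 - pert * h)⁻¹ʳ x ∈ FN n :=
    hph.inverse_one_sub_apply_mem (fun y hy => hpert_mem n _ (hhfil n y hy)) hx
  have C' := C.perturb hdN hpert hhp.isUnit_one_sub hph.isUnit_one_sub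
  refine ⟨g ∘ₗ pert ∘ₗ (1 - h * pert)⁻¹ʳ ∘ₗ nab, (1 - h * pert)⁻¹ʳ ∘ₗ nab,
    g ∘ₗ (1 - pert * h)⁻¹ʳ, (1 - h * pert)⁻¹ʳ ∘ₗ h,
    fun x => (hhp.eventually_sum_comp_pow_comp_apply (g ∘ₗ pert) nab x).exists_forall_of_atTop,
    fun x => (hhp.eventually_sum_comp_pow_comp_apply .id nab x).exists_forall_of_atTop,
    fun x => (hph.eventually_sum_comp_pow_comp_apply g .id x).exists_forall_of_atTop,
    fun x => (hhp.eventually_sum_comp_pow_comp_apply .id h x).exists_forall_of_atTop,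
    comp_self_eq_zero_of_retract (C.g_comp_inverse_comp_nab hhp.isUnit_one_sub) C'.nab_chain hpert,
    fun n x hx => hgfil n _ (hpertlow n _ (hhp_mem _ _ (hnabfil _ x hx))),
    fun x hx => ?_, C'.g_comp_nab, C'.homotopy, C'.g_comp_h, C'.h_comp_nab, C'.h_comp_h,
    C'.g_chain, C'.nab_chain, fun n x hx => hgfil n _ (hph_mem n x hx),
    fun n x hx => hhp_mem n _ (hnabfil n x hx), fun n x hx => hhp_mem n _ (hhfil n x hx)⟩
  · show g (pert ((1 - h * pert)⁻¹ʳ (nab x))) = 0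
    rw [hpert0 _ (hhp_mem 0 _ (hnabfil 0 x hx)), map_zero]

theorem statement1 (R : Type) [CommRing R]
    (M N : Type) [AddCommGroup M] [Module R M] [AddCommGroup N] [Module R N]
    (FM : ℕ → Submodule R M) (FN : ℕ → Submodule R N)
    (hFMmono : Monotone FM) (hFNmono : Monotone FN)
    (hFMexh : ∀ x : M, ∃ n, x ∈ FM n) (hFNexh : ∀ x : N, ∃ n, x ∈ FN n)
    (dM : M →ₗ[R] M) (dN : N →ₗ[R] N)
    (hdM : dM ∘ₗ dM = 0) (hdN : dN ∘ₗ dN = 0)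
    (hdMfil : ∀ n, ∀ x ∈ FM n, dM x ∈ FM n) (hdNfil : ∀ n, ∀ x ∈ FN n, dN x ∈ FN n)
    (g : N →ₗ[R] M) (nab : M →ₗ[R] N) (h : N →ₗ[R] N)
    (hgchain : dM ∘ₗ g = g ∘ₗ dN) (hnabchain : dN ∘ₗ nab = nab ∘ₗ dM)
    (hgfil : ∀ n, ∀ x ∈ FN n, g x ∈ FM n) (hnabfil : ∀ n, ∀ x ∈ FM n, nab x ∈ FN n)
    (hhfil : ∀ n, ∀ x ∈ FN n, h x ∈ FN n)
    (hretr : g ∘ₗ nab = LinearMap.id)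
    (hDh : dN ∘ₗ h + h ∘ₗ dN = nab ∘ₗ g - LinearMap.id)
    (hgh : g ∘ₗ h = 0) (hhnab : h ∘ₗ nab = 0) (hhh : h ∘ₗ h = 0)
    -- the perturbation of the differential of `N`:
    (pert : N →ₗ[R] N)
    (hpert : (dN + pert) ∘ₗ (dN + pert) = 0)
    (hpertlow : ∀ n, ∀ x ∈ FN (n + 1), pert x ∈ FN n)
    (hpert0 : ∀ x ∈ FN 0, pert x = 0) :
    ∃ (Dp : M →ₗ[R] M) (nabP : M →ₗ[R] N) (gP : N →ₗ[R] M) (hP : N →ₗ[R] N),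
      -- convergence of the four series:
      (∀ x : M, ∃ m₀, ∀ m ≥ m₀,
        (∑ n ∈ Finset.range m, pertTerm R M N g nab h pert n) x = Dp x) ∧
      (∀ x : M, ∃ m₀, ∀ m ≥ m₀,
        (∑ n ∈ Finset.range m,
          (((h ∘ₗ pert) ^ n : Module.End R N) ∘ₗ nab)) x = nabP x) ∧
      (∀ x : N, ∃ m₀, ∀ m ≥ m₀,
        (∑ n ∈ Finset.range m,
          (g ∘ₗ ((pert ∘ₗ h) ^ n : Module.End R N))) x = gP x) ∧
      (∀ x : N, ∃ m₀, ∀ m ≥ m₀,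
        (∑ n ∈ Finset.range m,
          (((h ∘ₗ pert) ^ n : Module.End R N) ∘ₗ h)) x = hP x) ∧
      -- `Dp` is a perturbation of the differential of `M`:
      ((dM + Dp) ∘ₗ (dM + Dp) = 0) ∧
      (∀ n, ∀ x ∈ FM (n + 1), Dp x ∈ FM n) ∧ (∀ x ∈ FM 0, Dp x = 0) ∧
      -- the perturbed data form a filtered contraction:
      (gP ∘ₗ nabP = LinearMap.id) ∧
      ((dN + pert) ∘ₗ hP + hP ∘ₗ (dN + pert) = nabP ∘ₗ gP - LinearMap.id) ∧
      (gP ∘ₗ hP = 0) ∧ (hP ∘ₗ nabP = 0) ∧ (hP ∘ₗ hP = 0) ∧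
      ((dM + Dp) ∘ₗ gP = gP ∘ₗ (dN + pert)) ∧
      ((dN + pert) ∘ₗ nabP = nabP ∘ₗ (dM + Dp)) ∧
      (∀ n, ∀ x ∈ FN n, gP x ∈ FM n) ∧ (∀ n, ∀ x ∈ FM n, nabP x ∈ FN n) ∧
      (∀ n, ∀ x ∈ FN n, hP x ∈ FN n) :=
  statement1_general R M N FM FN hFNmono hFNexh dM dN hdN g nab h hgchain hnabchain hgfil hnabfil
    hhfil hretr hDh hgh hhnab hhh pert hpert hpertlow hpert0
end

section
/- For a small category C and a group G, the assignment to a functor F : C → G of the induced simplicial principal G-bundle N(𝒫_{C,F}) → N(C) induces an injection from D(C,G) = Funct(C,G)/Map(Ob_C, G) into the set of isomorphism classes of simplicial principal G-bundles on N(C); two functors F₁, F₂ yield isomorphic bundles if and only if they are related by a natural transformation given by a map Φ : Ob_C → G (i.e. F₂(f) = Φ(x)F₁(f)Φ(y)⁻¹ for f : x → y). -/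
open CategoryTheory Simplicial

variable (C : Type) [Category C] (G : Type) [Group G]

/-- A functor from `C` to the group `G` (viewed as a one-object groupoid). -/
structure GFunctor where
  map : ∀ {x y : C}, (x ⟶ y) → G
  map_comp : ∀ {x y z : C} (f : x ⟶ y) (g : y ⟶ z), map (f ≫ g) = map f * map g
  map_id : ∀ x : C, map (𝟙 x) = 1

variable {C G}

/-- The twisting function `ρ ∘ NF : N(C) → G` induced by a functor
`F : C → G`: it sends a `(p+1)`-simplex to the value of `F` on its last
arrow. -/
def rhoF (F : GFunctor C G) (p : ℕ) (b : nerve C _⦋p + 1⦌) : G :=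
  F.map ((b : CategoryTheory.ComposableArrows C (p + 1)).map' p (p + 1))

/-- Faces of the twisted cartesian product `N(C) ×_{ρ∘NF} G`
(equivalently, of the pullback bundle `N(𝒫_{C,F})`): the last face is
twisted by `ρ ∘ NF`; `G` is trivially simplicial. -/
def dE (F : GFunctor C G) (p : ℕ) (j : Fin (p + 2))
    (z : nerve C _⦋p + 1⦌ × G) : nerve C _⦋p⦌ × G :=
  ((nerve C).δ j z.1, if (j : ℕ) = p + 1 then rhoF F p z.1 * z.2 else z.2)

/-- Degeneracies of `N(C) ×_{ρ∘NF} G`. -/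
def sE (p : ℕ) (j : Fin (p + 1)) (z : nerve C _⦋p⦌ × G) :
    nerve C _⦋p + 1⦌ × G :=
  ((nerve C).σ j z.1, z.2)

/-- An isomorphism of simplicial principal `G`-bundles over the identity of
`N(C)` between the bundles induced by the functors `F₁` and `F₂`. -/
def IsPBIso (F₁ F₂ : GFunctor C G)
    (Ψ : ∀ p : ℕ, nerve C _⦋p⦌ × G → nerve C _⦋p⦌ × G) : Prop :=
  (∀ (p : ℕ) (z : nerve C _⦋p⦌ × G), (Ψ p z).1 = z.1) ∧
  (∀ (p : ℕ) (z : nerve C _⦋p⦌ × G) (g : G),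
    Ψ p (z.1, z.2 * g) = ((Ψ p z).1, (Ψ p z).2 * g)) ∧
  (∀ (p : ℕ) (j : Fin (p + 2)) (z : nerve C _⦋p + 1⦌ × G),
    Ψ p (dE F₁ p j z) = dE F₂ p j (Ψ (p + 1) z)) ∧
  (∀ (p : ℕ) (j : Fin (p + 1)) (z : nerve C _⦋p⦌ × G),
    Ψ (p + 1) (sE p j z) = sE p j (Ψ p z)) ∧
  (∀ p : ℕ, Function.Bijective (Ψ p))

/-!
An equivariant map over the identity of `N(C)` is left multiplication by a function `φ` on
simplices. On a `1`-simplex `f : x ⟶ y`, compatibility with the untwisted face `d₀` gives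
`φ f = φ y`, and compatibility with the twisted face `d₁` gives `φ x * F₁ f = F₂ f * φ f`;
so `Φ := φ` on vertices relates `F₁` and `F₂`. Conversely, multiplying by `Φ` of the last
vertex is an isomorphism: the untwisted faces and all degeneracies keep the last vertex,
and the last face moves it along the last arrow, where the relation between `F₁` and `F₂`
is exactly what is needed.
-/

open ComposableArrows

lemma nerve_δ_obj {p : ℕ} (j : Fin (p + 2)) (b : nerve C _⦋p + 1⦌) (i : Fin (p + 1)) :
    ((nerve C).δ j b : ComposableArrows C p).obj i
      = (b : ComposableArrows C (p + 1)).obj (j.succAbove i) := rfl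

lemma nerve_σ_obj {p : ℕ} (j : Fin (p + 1)) (b : nerve C _⦋p⦌) (i : Fin (p + 2)) :
    ((nerve C).σ j b : ComposableArrows C (p + 1)).obj i
      = (b : ComposableArrows C p).obj (j.predAbove i) := rfl

lemma nerve_δ_zero_mk₁ {x y : C} (f : x ⟶ y) :
    (nerve C).δ (0 : Fin 2) (mk₁ f : nerve C _⦋1⦌) = (mk₀ y : nerve C _⦋0⦌) :=
  ext₀ rfl

lemma nerve_δ_one_mk₁ {x y : C} (f : x ⟶ y) :
    (nerve C).δ (1 : Fin 2) (mk₁ f : nerve C _⦋1⦌) = (mk₀ x : nerve C _⦋0⦌) :=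
  ext₀ rfl

lemma rhoF_mk₁ (F : GFunctor C G) {x y : C} (f : x ⟶ y) :
    rhoF F 0 (mk₁ f : nerve C _⦋1⦌) = F.map f := rfl

namespace IsPBIso

variable {F₁ F₂ : GFunctor C G} {Ψ : ∀ p : ℕ, nerve C _⦋p⦌ × G → nerve C _⦋p⦌ × G}

lemma apply_eq (hΨ : IsPBIso F₁ F₂ Ψ) (p : ℕ) (z : nerve C _⦋p⦌ × G) :
    Ψ p z = (z.1, (Ψ p (z.1, 1)).2 * z.2) := by
  obtain ⟨hover, hequiv, -⟩ := hΨ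
  calc Ψ p z = Ψ p ((z.1, 1).1, (z.1, 1).2 * z.2) := by rw [one_mul]
    _ = (z.1, (Ψ p (z.1, 1)).2 * z.2) := by rw [hequiv p (z.1, 1) z.2, hover]

lemma map_eq_conj (hΨ : IsPBIso F₁ F₂ Ψ) {x y : C} (f : x ⟶ y) :
    F₂.map f = (Ψ 0 (mk₀ x, 1)).2 * F₁.map f * (Ψ 0 (mk₀ y, 1)).2⁻¹ := by
  have hedge : Ψ 1 (mk₁ f, 1) = (mk₁ f, (Ψ 1 (mk₁ f, 1)).2) := Prod.ext (hΨ.1 1 _) rfl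
  have hd₀ := congrArg Prod.snd (hΨ.2.2.1 0 0 (mk₁ f, 1))
  have hd₁ := congrArg Prod.snd (hΨ.2.2.1 0 1 (mk₁ f, 1))
  rw [hedge] at hd₀ hd₁
  simp only [dE, Fin.val_zero, Fin.val_one, zero_add, rhoF_mk₁, nerve_δ_zero_mk₁,
    nerve_δ_one_mk₁, mul_one, if_true, if_neg zero_ne_one] at hd₀ hd₁
  rw [hΨ.apply_eq 0 (mk₀ x, F₁.map f)] at hd₁
  rw [eq_mul_inv_iff_mul_eq, hd₀, ← hd₁]

end IsPBIso

def gaugeMap (Φ : C → G) (p : ℕ) (z : nerve C _⦋p⦌ × G) : nerve C _⦋p⦌ × G :=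
  (z.1, Φ ((z.1 : ComposableArrows C p).obj (Fin.last p)) * z.2)

section gaugeMap

variable {F₁ F₂ : GFunctor C G} {Φ : C → G}

lemma gaugeMap_dE (hΦ : ∀ (x y : C) (f : x ⟶ y), F₂.map f = Φ x * F₁.map f * (Φ y)⁻¹)
    (p : ℕ) (j : Fin (p + 2)) (z : nerve C _⦋p + 1⦌ × G) :
    gaugeMap Φ p (dE F₁ p j z) = dE F₂ p j (gaugeMap Φ (p + 1) z) := by
  by_cases hj : (j : ℕ) = p + 1
  · obtain rfl : j = Fin.last (p + 1) := Fin.ext hj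
    simp only [gaugeMap, dE, if_pos hj, nerve_δ_obj, Fin.succAbove_last_apply, rhoF,
      hΦ _ _ ((z.1 : ComposableArrows C (p + 1)).map' p (p + 1))]
    have hcancel : ∀ a m b g : G, a * (m * g) = a * m * b⁻¹ * (b * g) := by
      simp [mul_assoc]
    -- `rhoF` indexes the vertices as `⟨p, _⟩, ⟨p + 1, _⟩`, equal to `(last p).castSucc` and
    -- `last (p + 1)` only up to defeq, hence `exact` rather than a rewrite
    exact congrArg _ (hcancel _ _ _ _)
  · have hle : j ≤ (Fin.last p).castSucc :=
      Fin.le_def.2 (by simp only [Fin.val_castSucc, Fin.val_last]; omega)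
    simp only [gaugeMap, dE, if_neg hj, nerve_δ_obj, Fin.succAbove_of_le_castSucc _ _ hle,
      Fin.succ_last]

lemma gaugeMap_sE (p : ℕ) (j : Fin (p + 1)) (z : nerve C _⦋p⦌ × G) :
    gaugeMap Φ (p + 1) (sE p j z) = sE p j (gaugeMap Φ p z) := by
  simp only [gaugeMap, sE, nerve_σ_obj, Fin.predAbove_right_last]

lemma gaugeMap_bijective (p : ℕ) : Function.Bijective (gaugeMap Φ p) := by
  refine Function.bijective_iff_has_inverse.mpr
    ⟨gaugeMap (fun x => (Φ x)⁻¹) p, fun z => ?_, fun z => ?_⟩ <;> simp [gaugeMap]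

lemma isPBIso_gaugeMap (hΦ : ∀ (x y : C) (f : x ⟶ y), F₂.map f = Φ x * F₁.map f * (Φ y)⁻¹) :
    IsPBIso F₁ F₂ (gaugeMap Φ) :=
  ⟨fun _ _ => rfl, fun _ _ _ => by simp [gaugeMap, mul_assoc], gaugeMap_dE hΦ, gaugeMap_sE,
    gaugeMap_bijective⟩

end gaugeMap

theorem statement18 (F₁ F₂ : GFunctor C G) :
    (∃ Ψ, IsPBIso F₁ F₂ Ψ) ↔
    (∃ Φ : C → G, ∀ (x y : C) (f : x ⟶ y),
      F₂.map f = Φ x * F₁.map f * (Φ y)⁻¹) :=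
  ⟨fun ⟨Ψ, hΨ⟩ => ⟨fun x => (Ψ 0 (mk₀ x, 1)).2, fun _ _ f => hΨ.map_eq_conj f⟩,
    fun ⟨_, hΦ⟩ => ⟨_, isPBIso_gaugeMap hΦ⟩⟩
end
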